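/- The digraph D on ℤ × {-1,0,1} × {-1,0,1}, with edges from (i,x₁,y₁) to (i+1,x₂,y₂) iff (i even and y₁+y₂ ≠ 0) or (i odd and x₁+x₂ ≠ 0), is highly arc transitive: for every n, its automorphism group acts transitively on the set of n-arcs. -/
import Mathlib


variable {V : Type*}

/-- An alternating walk: a sequence of edges where consecutive edges
alternately share their initial or terminal vertex (the Boolean `b`
selects which of the two alternation patterns is used). -/
def IsAltWalk (A : V → V → Prop) {n : ℕ} (w : Fin n → V × V) (b : Bool) : Prop :=
  (∀ i, A (w i).1 (w i).2) ∧
  ∀ (i : Fin n) (h : (i : ℕ) + 1 < n),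
    if (((i : ℕ) % 2 == 0) == b)
    then (w i).1 = (w ⟨(i : ℕ) + 1, h⟩).1
    else (w i).2 = (w ⟨(i : ℕ) + 1, h⟩).2

/-- Two edges are reachable from each other iff some alternating walk contains both. -/
def Reach (A : V → V → Prop) (e f : V × V) : Prop :=
  ∃ (n : ℕ) (w : Fin n → V × V) (b : Bool),
    IsAltWalk A w b ∧ (∃ i, w i = e) ∧ (∃ j, w j = f)

/-- A digraph automorphism. -/
def IsAuto (A : V → V → Prop) (f : V ≃ V) : Prop :=
  ∀ u v, A u v ↔ A (f u) (f v)

/-- An `n`-arc, given by its sequence of `n+1` vertices. -/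
def IsArc (A : V → V → Prop) {n : ℕ} (p : Fin (n + 1) → V) : Prop :=
  ∀ i : Fin n, A (p i.castSucc) (p i.succ)

/-- Highly arc transitive: for every `n` the set of `n`-arcs is nonempty and the
automorphism group acts transitively on it. -/
def IsHAT (A : V → V → Prop) : Prop :=
  ∀ n : ℕ, (∃ p : Fin (n + 1) → V, IsArc A p) ∧
    ∀ p q : Fin (n + 1) → V, IsArc A p → IsArc A q →
      ∃ f : V ≃ V, IsAuto A f ∧ ∀ i, f (p i) = q i

/-- Vertices of the subgraph `Δ(e)` spanned by the reachability class of `e`. -/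
def DeltaVerts (A : V → V → Prop) (e : V × V) : Set V :=
  {v | ∃ u, Reach A e (v, u) ∨ Reach A e (u, v)}

/-- `φ` is a digraph epimorphism onto the integer line `Z`
(edge-preserving, vertex-surjective and edge-surjective), i.e. Property Z. -/
def IsEpiZ (A : V → V → Prop) (φ : V → ℤ) : Prop :=
  (∀ u v, A u v → φ v = φ u + 1) ∧ Function.Surjective φ ∧
    ∀ i : ℤ, ∃ u v, A u v ∧ φ u = i

/-- Vertex set of the digraph `D`: `ℤ × {-1,0,1} × {-1,0,1}`. -/
abbrev DV : Type := ℤ × SignType × SignType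

/-- Edges of `D`: from `(i,x₁,y₁)` to `(i+1,x₂,y₂)` iff
(`i` even and `y₁+y₂ ≠ 0`) or (`i` odd and `x₁+x₂ ≠ 0`). -/
def DAdj (u v : DV) : Prop :=
  v.1 = u.1 + 1 ∧
    ((Even u.1 ∧ ((u.2.2 : ℤ) + (v.2.2 : ℤ) ≠ 0)) ∨
     (Odd u.1 ∧ ((u.2.1 : ℤ) + (v.2.1 : ℤ) ≠ 0)))

section DHATAux
open Equiv

lemma sign_neg_neg : ∀ a : SignType, -(-a) = a := by decide
lemma sign_neg_inj : ∀ a b : SignType, (-a = -b) ↔ a = b := by decide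
lemma sign_flip : ∀ a b : SignType, (b = -a) ↔ (-b = a) := by decide
lemma sum_zero : ∀ a b : SignType, ((a:ℤ) + (b:ℤ) = 0) ↔ b = -a := by decide

def negS : Equiv.Perm SignType := ⟨fun a => -a, fun a => -a, sign_neg_neg, sign_neg_neg⟩
@[simp] lemma negS_apply (a : SignType) : negS a = -a := rfl

lemma key_iff (g : Equiv.Perm SignType) (a b : SignType) :
    ((a:ℤ) + (b:ℤ) ≠ 0) ↔ ((g a : ℤ) + (((-(g (-b))) : SignType) : ℤ) ≠ 0) := by
  rw [not_iff_not, sum_zero, sum_zero, sign_neg_inj, Equiv.apply_eq_iff_eq]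
  exact sign_flip a b

def pairPerm (u v u' v' : SignType) : Equiv.Perm SignType :=
  (Equiv.swap u u').trans (Equiv.swap ((Equiv.swap u u') (-v)) (-v'))

lemma pairPerm_fst : ∀ u v u' v' : SignType, (u:ℤ) + (v:ℤ) ≠ 0 → (u':ℤ) + (v':ℤ) ≠ 0 →
    pairPerm u v u' v' u = u' := by decide

lemma pairPerm_snd : ∀ u v u' v' : SignType, (u:ℤ) + (v:ℤ) ≠ 0 → (u':ℤ) + (v':ℤ) ≠ 0 →
    pairPerm u v u' v' (-v) = -v' := by decide

def fillPair (ia ib : Bool) (a b : SignType) : SignType × SignType :=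
  match ia, ib with
  | true, true => (a, b)
  | true, false => (a, if a = 0 then 1 else a)
  | false, true => ((if b = 0 then 1 else b), b)
  | false, false => (1, 1)

lemma fillPair_sum : ∀ (ia ib : Bool) (a b : SignType),
    (ia = true → ib = true → (a:ℤ) + (b:ℤ) ≠ 0) →
    ((fillPair ia ib a b).1 : ℤ) + ((fillPair ia ib a b).2 : ℤ) ≠ 0 := by decide
lemma fillPair_fst : ∀ (ia ib : Bool) (a b : SignType), ia = true → (fillPair ia ib a b).1 = a := by decide
lemma fillPair_snd : ∀ (ia ib : Bool) (a b : SignType), ib = true → (fillPair ia ib a b).2 = b := by decide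

def famG (inR : ℤ → Bool) (vp vq : ℤ → SignType) (i : ℤ) : Equiv.Perm SignType :=
  pairPerm (fillPair (inR i) (inR (i+1)) (vp i) (vp (i+1))).1
           (fillPair (inR i) (inR (i+1)) (vp i) (vp (i+1))).2
           (fillPair (inR i) (inR (i+1)) (vq i) (vq (i+1))).1
           (fillPair (inR i) (inR (i+1)) (vq i) (vq (i+1))).2

def fam (r : ℤ) (inR : ℤ → Bool) (vp vq : ℤ → SignType) (j : ℤ) : Equiv.Perm SignType :=
  if j % 2 = r then famG inR vp vq j else negS.trans ((famG inR vp vq (j-1)).trans negS)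

lemma fam_compat (r : ℤ) (inR : ℤ → Bool) (vp vq : ℤ → SignType) (hr : r = 0 ∨ r = 1) :
    ∀ i, i % 2 = r → ∀ y, fam r inR vp vq (i+1) y = -(fam r inR vp vq i (-y)) := by
  intro i hi y
  unfold fam
  have h1 : ¬((i+1) % 2 = r) := by rcases hr with h | h <;> omega
  rw [if_neg h1, if_pos hi]
  simp only [add_sub_cancel_right, Equiv.trans_apply, negS_apply]

lemma famG_fst (inR : ℤ → Bool) (vp vq : ℤ → SignType) (i : ℤ) (h1 : inR i = true)
    (Hp : inR i = true → inR (i+1) = true → ((vp i : ℤ) + (vp (i+1):ℤ) ≠ 0))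
    (Hq : inR i = true → inR (i+1) = true → ((vq i : ℤ) + (vq (i+1):ℤ) ≠ 0)) :
    famG inR vp vq i (vp i) = vq i := by
  have sp := fillPair_sum (inR i) (inR (i+1)) (vp i) (vp (i+1)) Hp
  have sq := fillPair_sum (inR i) (inR (i+1)) (vq i) (vq (i+1)) Hq
  have e1 := fillPair_fst (inR i) (inR (i+1)) (vp i) (vp (i+1)) h1
  have e2 := fillPair_fst (inR i) (inR (i+1)) (vq i) (vq (i+1)) h1
  calc famG inR vp vq i (vp i)
      = famG inR vp vq i (fillPair (inR i) (inR (i+1)) (vp i) (vp (i+1))).1 := by rw [e1]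
    _ = (fillPair (inR i) (inR (i+1)) (vq i) (vq (i+1))).1 := pairPerm_fst _ _ _ _ sp sq
    _ = vq i := e2

lemma famG_snd (inR : ℤ → Bool) (vp vq : ℤ → SignType) (i : ℤ) (h2 : inR (i+1) = true)
    (Hp : inR i = true → inR (i+1) = true → ((vp i : ℤ) + (vp (i+1):ℤ) ≠ 0))
    (Hq : inR i = true → inR (i+1) = true → ((vq i : ℤ) + (vq (i+1):ℤ) ≠ 0)) :
    famG inR vp vq i (-(vp (i+1))) = -(vq (i+1)) := by
  have sp := fillPair_sum (inR i) (inR (i+1)) (vp i) (vp (i+1)) Hp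
  have sq := fillPair_sum (inR i) (inR (i+1)) (vq i) (vq (i+1)) Hq
  have e1 := fillPair_snd (inR i) (inR (i+1)) (vp i) (vp (i+1)) h2
  have e2 := fillPair_snd (inR i) (inR (i+1)) (vq i) (vq (i+1)) h2
  calc famG inR vp vq i (-(vp (i+1)))
      = famG inR vp vq i (-(fillPair (inR i) (inR (i+1)) (vp i) (vp (i+1))).2) := by rw [e1]
    _ = -(fillPair (inR i) (inR (i+1)) (vq i) (vq (i+1))).2 := pairPerm_snd _ _ _ _ sp sq
    _ = -(vq (i+1)) := by rw [e2]

lemma fam_map (r : ℤ) (inR : ℤ → Bool) (vp vq : ℤ → SignType) (hr : r = 0 ∨ r = 1)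
    (Hp : ∀ i, i % 2 = r → inR i = true → inR (i+1) = true → ((vp i : ℤ) + (vp (i+1) : ℤ) ≠ 0))
    (Hq : ∀ i, i % 2 = r → inR i = true → inR (i+1) = true → ((vq i : ℤ) + (vq (i+1) : ℤ) ≠ 0)) :
    ∀ j, inR j = true → fam r inR vp vq j (vp j) = vq j := by
  intro j hj
  by_cases h : j % 2 = r
  · unfold fam
    rw [if_pos h]
    exact famG_fst inR vp vq j hj (Hp j h) (Hq j h)
  · unfold fam
    rw [if_neg h]
    have h2 : (j-1) % 2 = r := by rcases hr with h' | h' <;> omega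
    have h3 : j - 1 + 1 = j := by omega
    have key := famG_snd inR vp vq (j-1) (by rw [h3]; exact hj) (Hp _ h2) (Hq _ h2)
    rw [h3] at key
    simp only [Equiv.trans_apply, negS_apply]
    rw [key, sign_neg_neg]

def prodEquiv (A B : ℤ → Equiv.Perm SignType) : DV ≃ DV where
  toFun v := (v.1, A v.1 v.2.1, B v.1 v.2.2)
  invFun v := (v.1, (A v.1).symm v.2.1, (B v.1).symm v.2.2)
  left_inv v := by simp
  right_inv v := by simp

lemma prodEquiv_apply (A B : ℤ → Equiv.Perm SignType) (v : DV) :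
    prodEquiv A B v = (v.1, A v.1 v.2.1, B v.1 v.2.2) := rfl

lemma prodEquiv_auto (A B : ℤ → Equiv.Perm SignType)
    (hA : ∀ i, i % 2 ≠ 0 → ∀ x, A (i+1) x = -(A i (-x)))
    (hB : ∀ i, i % 2 = 0 → ∀ y, B (i+1) y = -(B i (-y))) :
    IsAuto DAdj (prodEquiv A B) := by
  intro u v
  unfold DAdj prodEquiv
  simp only [Equiv.coe_fn_mk]
  apply and_congr_right
  intro h1
  rw [h1]
  apply or_congr
  · apply and_congr_right; intro he
    rw [hB u.1 (Int.even_iff.mp he) v.2.2]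
    exact key_iff (B u.1) u.2.2 v.2.2
  · apply and_congr_right; intro ho
    rw [hA u.1 (by rw [Int.odd_iff] at ho; omega) v.2.1]
    exact key_iff (A u.1) u.2.1 v.2.1

def shiftE (d : ℤ) : DV ≃ DV where
  toFun v := (v.1 + d, v.2)
  invFun v := (v.1 - d, v.2)
  left_inv v := by simp
  right_inv v := by simp

def shiftO (d : ℤ) : DV ≃ DV where
  toFun v := (v.1 + d, v.2.2, v.2.1)
  invFun v := (v.1 - d, v.2.2, v.2.1)
  left_inv v := by simp
  right_inv v := by simp

lemma shiftE_auto (d : ℤ) (hd : d % 2 = 0) : IsAuto DAdj (shiftE d) := by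
  intro u v
  unfold DAdj shiftE
  simp only [Equiv.coe_fn_mk]
  have h2 : v.1 + d = u.1 + d + 1 ↔ v.1 = u.1 + 1 := by omega
  have hE : Even (u.1 + d) ↔ Even u.1 := by rw [Int.even_iff, Int.even_iff]; omega
  have hO : Odd (u.1 + d) ↔ Odd u.1 := by rw [Int.odd_iff, Int.odd_iff]; omega
  rw [h2, hE, hO]

lemma shiftO_auto (d : ℤ) (hd : d % 2 = 1) : IsAuto DAdj (shiftO d) := by
  intro u v
  unfold DAdj shiftO
  simp only [Equiv.coe_fn_mk]
  have h2 : v.1 + d = u.1 + d + 1 ↔ v.1 = u.1 + 1 := by omega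
  have hE : Even (u.1 + d) ↔ Odd u.1 := by rw [Int.even_iff, Int.odd_iff]; omega
  have hO : Odd (u.1 + d) ↔ Even u.1 := by rw [Int.odd_iff, Int.even_iff]; omega
  rw [h2, hE, hO]
  tauto

lemma auto_trans {W : Type*} {A : W → W → Prop} {f g : W ≃ W}
    (hf : IsAuto A f) (hg : IsAuto A g) : IsAuto A (f.trans g) := by
  intro u v
  rw [hf u v, hg (f u) (f v)]
  rfl

lemma arc_level {n : ℕ} {p : Fin (n+1) → DV} (hp : IsArc DAdj p) :
    ∀ m : Fin (n+1), (p m).1 = (p 0).1 + ((m : ℕ) : ℤ) := by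
  have aux : ∀ (m : ℕ) (hm : m < n+1), (p ⟨m, hm⟩).1 = (p 0).1 + (m : ℤ) := by
    intro m
    induction m with
    | zero => intro hm; simp
    | succ k ih =>
      intro hm
      have hk : k < n + 1 := by omega
      have hkn : k < n := by omega
      have e1 : (p (Fin.succ ⟨k, hkn⟩)).1 = (p (Fin.castSucc ⟨k, hkn⟩)).1 + 1 := (hp ⟨k, hkn⟩).1
      have c1 : Fin.castSucc ⟨k, hkn⟩ = (⟨k, hk⟩ : Fin (n+1)) := rfl
      have c2 : Fin.succ ⟨k, hkn⟩ = (⟨k+1, hm⟩ : Fin (n+1)) := rfl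
      rw [c1, c2] at e1
      rw [e1, ih hk]
      push_cast
      ring
  intro m
  have := aux m.val m.isLt
  simpa [Fin.eta] using this

lemma exists_prod_map {n : ℕ} (p q : Fin (n+1) → DV) (hp : IsArc DAdj p) (hq : IsArc DAdj q)
    (hl : (p 0).1 = (q 0).1) :
    ∃ f : DV ≃ DV, IsAuto DAdj f ∧ ∀ i, f (p i) = q i := by
  classical
  obtain ⟨ℓ, hℓ⟩ : ∃ l : ℤ, (p 0).1 = l := ⟨_, rfl⟩
  have hℓq : (q 0).1 = ℓ := by omega
  set inR : ℤ → Bool := fun j => decide (ℓ ≤ j ∧ j ≤ ℓ + n) with hinR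
  set idx : ℤ → Fin (n+1) :=
    fun j => ⟨min (j - ℓ).toNat n, Nat.lt_succ_of_le (Nat.min_le_right _ _)⟩ with hidx
  have hrange : ∀ j, inR j = true → ℓ ≤ j ∧ j ≤ ℓ + n := by
    intro j hj; simpa [hinR] using hj
  have hidx_eq : ∀ (j : ℤ), ℓ ≤ j ∧ j ≤ ℓ + n → ((idx j : Fin (n+1)) : ℕ) = (j - ℓ).toNat := by
    intro j hj
    simp only [hidx]
    exact Nat.min_eq_left (by omega)
  have plevel : ∀ j, inR j = true → (p (idx j)).1 = j := by
    intro j hj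
    have hr := hrange j hj
    rw [arc_level hp, hℓ, hidx_eq j hr]
    omega
  have qlevel : ∀ j, inR j = true → (q (idx j)).1 = j := by
    intro j hj
    have hr := hrange j hj
    rw [arc_level hq, hℓq, hidx_eq j hr]
    omega
  have adjp : ∀ j, inR j = true → inR (j+1) = true → DAdj (p (idx j)) (p (idx (j+1))) := by
    intro j h1 h2
    have r1 := hrange j h1
    have r2 := hrange _ h2
    have hmn : (j - ℓ).toNat < n := by omega
    have e1 : idx j = Fin.castSucc ⟨(j-ℓ).toNat, hmn⟩ := by
      apply Fin.ext
      rw [hidx_eq j r1]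
      rfl
    have e2 : idx (j+1) = Fin.succ ⟨(j-ℓ).toNat, hmn⟩ := by
      apply Fin.ext
      rw [hidx_eq _ r2]
      simp only [Fin.val_succ]
      omega
    rw [e1, e2]
    exact hp ⟨_, hmn⟩
  have adjq : ∀ j, inR j = true → inR (j+1) = true → DAdj (q (idx j)) (q (idx (j+1))) := by
    intro j h1 h2
    have r1 := hrange j h1
    have r2 := hrange _ h2
    have hmn : (j - ℓ).toNat < n := by omega
    have e1 : idx j = Fin.castSucc ⟨(j-ℓ).toNat, hmn⟩ := by
      apply Fin.ext; rw [hidx_eq j r1]; rfl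
    have e2 : idx (j+1) = Fin.succ ⟨(j-ℓ).toNat, hmn⟩ := by
      apply Fin.ext; rw [hidx_eq _ r2]; simp only [Fin.val_succ]; omega
    rw [e1, e2]
    exact hq ⟨_, hmn⟩
  have Hpy : ∀ i, i % 2 = 0 → inR i = true → inR (i+1) = true →
      ((p (idx i)).2.2 : ℤ) + ((p (idx (i+1))).2.2 : ℤ) ≠ 0 := by
    intro i h0 h1 h2
    obtain ⟨-, h⟩ := adjp i h1 h2
    rcases h with ⟨-, hy⟩ | ⟨ho, -⟩
    · exact hy
    · rw [plevel i h1, Int.odd_iff] at ho; omega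
  have Hqy : ∀ i, i % 2 = 0 → inR i = true → inR (i+1) = true →
      ((q (idx i)).2.2 : ℤ) + ((q (idx (i+1))).2.2 : ℤ) ≠ 0 := by
    intro i h0 h1 h2
    obtain ⟨-, h⟩ := adjq i h1 h2
    rcases h with ⟨-, hy⟩ | ⟨ho, -⟩
    · exact hy
    · rw [qlevel i h1, Int.odd_iff] at ho; omega
  have Hpx : ∀ i, i % 2 = 1 → inR i = true → inR (i+1) = true →
      ((p (idx i)).2.1 : ℤ) + ((p (idx (i+1))).2.1 : ℤ) ≠ 0 := by
    intro i h0 h1 h2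
    obtain ⟨-, h⟩ := adjp i h1 h2
    rcases h with ⟨he, -⟩ | ⟨-, hx⟩
    · rw [plevel i h1, Int.even_iff] at he; omega
    · exact hx
  have Hqx : ∀ i, i % 2 = 1 → inR i = true → inR (i+1) = true →
      ((q (idx i)).2.1 : ℤ) + ((q (idx (i+1))).2.1 : ℤ) ≠ 0 := by
    intro i h0 h1 h2
    obtain ⟨-, h⟩ := adjq i h1 h2
    rcases h with ⟨he, -⟩ | ⟨-, hx⟩
    · rw [qlevel i h1, Int.even_iff] at he; omega
    · exact hx
  refine ⟨prodEquiv (fam 1 inR (fun j => (p (idx j)).2.1) (fun j => (q (idx j)).2.1))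
                    (fam 0 inR (fun j => (p (idx j)).2.2) (fun j => (q (idx j)).2.2)),
    prodEquiv_auto _ _ ?_ ?_, ?_⟩
  · intro i hi x
    exact fam_compat 1 inR _ _ (Or.inr rfl) i (by omega) x
  · intro i hi y
    exact fam_compat 0 inR _ _ (Or.inl rfl) i hi y
  · intro i
    have hiLt : (i : ℕ) < n + 1 := i.isLt
    have hin : inR (ℓ + ((i : ℕ) : ℤ)) = true := by
      simp only [hinR, decide_eq_true_eq]
      omega
    have hidxi : idx (ℓ + ((i : ℕ) : ℤ)) = i := by
      apply Fin.ext
      rw [hidx_eq _ (hrange _ hin)]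
      omega
    have h1 : (p i).1 = ℓ + ((i : ℕ) : ℤ) := by rw [arc_level hp, hℓ]
    have h2 : (q i).1 = ℓ + ((i : ℕ) : ℤ) := by rw [arc_level hq, hℓq]
    have mA := fam_map 1 inR _ _ (Or.inr rfl) Hpx Hqx (ℓ + ((i : ℕ) : ℤ)) hin
    have mB := fam_map 0 inR _ _ (Or.inl rfl) Hpy Hqy (ℓ + ((i : ℕ) : ℤ)) hin
    simp only [hidxi] at mA mB
    rw [prodEquiv_apply, h1, Prod.ext_iff, Prod.ext_iff]
    exact ⟨h2.symm, mA, mB⟩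

lemma arc_of_auto {f : DV ≃ DV} (hf : IsAuto DAdj f) {n : ℕ} {p : Fin (n+1) → DV}
    (hp : IsArc DAdj p) : IsArc DAdj (fun m => f (p m)) :=
  fun i => (hf _ _).mp (hp i)

end DHATAux

/-- The digraph `D` is highly arc transitive. -/
theorem D_highly_arc_transitive : IsHAT DAdj := by
  intro n
  refine ⟨⟨fun m => (((m : ℕ) : ℤ), 1, 1), ?_⟩, ?_⟩
  · intro i
    refine ⟨?_, ?_⟩
    · show (((i.succ : ℕ) : ℤ)) = ((i.castSucc : ℕ) : ℤ) + 1
      rw [Fin.val_succ, Fin.coe_castSucc]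
      push_cast
      ring
    · rcases Int.even_or_odd (((i.castSucc : ℕ) : ℤ)) with h | h
      · exact Or.inl ⟨h, show ((1:SignType):ℤ) + ((1:SignType):ℤ) ≠ 0 by decide⟩
      · exact Or.inr ⟨h, show ((1:SignType):ℤ) + ((1:SignType):ℤ) ≠ 0 by decide⟩
  · intro p q hp hq
    obtain ⟨d, hd⟩ : ∃ d : ℤ, (q 0).1 - (p 0).1 = d := ⟨_, rfl⟩
    by_cases hpar : d % 2 = 0
    · have hs := shiftE_auto d hpar
      have hps : IsArc DAdj (fun m => shiftE d (p m)) := arc_of_auto hs hp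
      have hl : ((fun m => shiftE d (p m)) 0).1 = (q 0).1 := by
        show (p 0).1 + d = (q 0).1
        omega
      obtain ⟨f, hf, hm⟩ := exists_prod_map _ q hps hq hl
      exact ⟨(shiftE d).trans f, auto_trans hs hf, fun i => hm i⟩
    · have hpar' : d % 2 = 1 := by omega
      have hs := shiftO_auto d hpar'
      have hps : IsArc DAdj (fun m => shiftO d (p m)) := arc_of_auto hs hp
      have hl : ((fun m => shiftO d (p m)) 0).1 = (q 0).1 := by
        show (p 0).1 + d = (q 0).1
        omega
      obtain ⟨f, hf, hm⟩ := exists_prod_map _ q hps hq hl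
      exact ⟨(shiftO d).trans f, auto_trans hs hf, fun i => hm i⟩
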